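/- Suppose Q is in rational normal form with parameters z and k_1,…,k_d, and γ is generic. Then every 2-cocycle α on g(γ,Q) is cohomologous to a 2-cocycle vanishing off the diagonal: there exists a linear map f:g→ℂ such that (α−ψ_f)(L_m,L_n)=0 for all m,n∈ℤ^d with m+n≠0. -/

import Mathlib

open scoped BigOperators

namespace QTorus

/-- σ(m,n) = ∏_{i<j} q_{ji}^{m_j n_i}. -/
noncomputable def qsigma (d : ℕ) (Q : Matrix (Fin d) (Fin d) ℂ) (m n : Fin d → ℤ) : ℂ :=
  ∏ i : Fin d, ∏ j : Fin d, if i < j then Q j i ^ (m j * n i) else 1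

/-- The radical subgroup R = {m | σ(m,n)=σ(n,m) for all n}. -/
def Rset (d : ℕ) (Q : Matrix (Fin d) (Fin d) ℂ) : Set (Fin d → ℤ) :=
  {m | ∀ n : Fin d → ℤ, qsigma d Q m n = qsigma d Q n m}

/-- (γ|m) = ∑ γ_i m_i. -/
noncomputable def ip (d : ℕ) (γ : Fin d → ℂ) (m : Fin d → ℤ) : ℂ :=
  ∑ i : Fin d, γ i * (m i : ℂ)

/-- The underlying vector space of g(γ,Q): formal ℂ-linear combinations of basis
vectors indexed by ℤ^d. -/
abbrev g (d : ℕ) := (Fin d → ℤ) →₀ ℂ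

/-- The basis vector L_m. -/
noncomputable def L (d : ℕ) (m : Fin d → ℤ) : g d := Finsupp.single m 1

/-- Hypotheses on the matrix Q: nonzero entries, q_{ii}=1, q_{ij}q_{ji}=1. -/
def QOk (d : ℕ) (Q : Matrix (Fin d) (Fin d) ℂ) : Prop :=
  (∀ i, Q i i = 1) ∧ (∀ i j, Q i j * Q j i = 1) ∧ (∀ i j, Q i j ≠ 0)

/-- γ is generic: γ_1,…,γ_d are linearly independent over ℚ. -/
def Generic (d : ℕ) (γ : Fin d → ℂ) : Prop := LinearIndependent ℚ γ

open Classical in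
/-- Structure constants of g(γ,Q): [L_m, L_n] = sc(m,n) • L_{m+n}. -/
noncomputable def sc (d : ℕ) (Q : Matrix (Fin d) (Fin d) ℂ) (γ : Fin d → ℂ)
    (m n : Fin d → ℤ) : ℂ :=
  if m ∈ Rset d Q then
    (if n ∈ Rset d Q then qsigma d Q m n * ip d γ (n - m)
     else qsigma d Q m n * ip d γ n)
  else
    (if n ∈ Rset d Q then -(qsigma d Q n m * ip d γ m)
     else qsigma d Q m n - qsigma d Q n m)

/-- The bracket of g(γ,Q), as the bilinear extension of
[L_m, L_n] = sc(m,n) • L_{m+n}. -/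
noncomputable def br (d : ℕ) (Q : Matrix (Fin d) (Fin d) ℂ) (γ : Fin d → ℂ)
    (x y : g d) : g d :=
  x.sum fun m a => y.sum fun n b => Finsupp.single (m + n) (a * b * sc d Q γ m n)

/-- A Lie algebra automorphism of g(γ,Q): a linear equivalence preserving the bracket. -/
def IsAut (d : ℕ) (Q : Matrix (Fin d) (Fin d) ℂ) (γ : Fin d → ℂ)
    (θ : g d ≃ₗ[ℂ] g d) : Prop :=
  ∀ x y : g d, θ (br d Q γ x y) = br d Q γ (θ x) (θ y)

/-- A derivation of g(γ,Q). -/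
def IsDer (d : ℕ) (Q : Matrix (Fin d) (Fin d) ℂ) (γ : Fin d → ℂ)
    (D : g d →ₗ[ℂ] g d) : Prop :=
  ∀ x y : g d, D (br d Q γ x y) = br d Q γ (D x) y + br d Q γ x (D y)

open Classical in
/-- δ(n,R) = 1 if n ∈ R, 0 otherwise. -/
noncomputable def deltaR (d : ℕ) (Q : Matrix (Fin d) (Fin d) ℂ) (n : Fin d → ℤ) : ℕ :=
  if n ∈ Rset d Q then 1 else 0

/-- A 2-cocycle on g(γ,Q). -/
def IsCocycle (d : ℕ) (Q : Matrix (Fin d) (Fin d) ℂ) (γ : Fin d → ℂ)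
    (α : g d →ₗ[ℂ] g d →ₗ[ℂ] ℂ) : Prop :=
  (∀ x y : g d, α x y = - α y x) ∧
  (∀ x y z : g d,
    α (br d Q γ x y) z + α (br d Q γ z x) y + α (br d Q γ y z) x = 0)

/-- i ↔ j is one of the exceptional index pairs (2l-1,2l) (1-based) of the rational
normal form. Here indices are 0-based. -/
def OffDiagPair (z : ℕ) (i j : ℕ) : Prop :=
  ∃ l : ℕ, l < z ∧ ((i = 2 * l ∧ j = 2 * l + 1) ∨ (i = 2 * l + 1 ∧ j = 2 * l))

/-- Q is in rational normal form with parameters z and k_1,…,k_d (0-based indexing: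
the paper's pair (2i-1,2i) is the Lean pair (2l, 2l+1) with l = i-1). -/
def IsRNF (d : ℕ) (Q : Matrix (Fin d) (Fin d) ℂ) (z : ℕ) (k : Fin d → ℕ) : Prop :=
  0 < z ∧ 2 * z ≤ d ∧
  (∀ i j : Fin d, ¬ OffDiagPair z i.val j.val → Q i j = 1) ∧
  (∀ (l : ℕ) (_ : l < z) (hi : 2 * l < d) (hj : 2 * l + 1 < d),
      IsPrimitiveRoot (Q ⟨2 * l, hi⟩ ⟨2 * l + 1, hj⟩) (k ⟨2 * l, hi⟩) ∧
      Q ⟨2 * l + 1, hj⟩ ⟨2 * l, hi⟩ = (Q ⟨2 * l, hi⟩ ⟨2 * l + 1, hj⟩)⁻¹ ∧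
      k ⟨2 * l + 1, hj⟩ = k ⟨2 * l, hi⟩ ∧
      1 < k ⟨2 * l, hi⟩) ∧
  (∀ (i : ℕ) (_ : i + 1 < 2 * z) (h1 : i < d) (h2 : i + 1 < d),
      k ⟨i + 1, h2⟩ ∣ k ⟨i, h1⟩) ∧
  (∀ i : Fin d, 2 * z ≤ i.val → k i = 1)

/-- The vector k_1 e_1 ∈ ℤ^d. -/
noncomputable def k1e1 (d : ℕ) (k : Fin d → ℕ) (hd : 0 < d) : Fin d → ℤ :=
  Pi.single ⟨0, hd⟩ (k ⟨0, hd⟩ : ℤ)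

/-- A 2-cocycle is normalized if α(L_{m-k₁e₁}, L_{k₁e₁})=0 for m ∈ R, m ≠ 2k₁e₁,
α(L_0, L_{2k₁e₁})=0, α(L_0, L_s)=0 for s ∉ R, and α(L_m,L_n)=0 whenever m+n ≠ 0. -/
def IsNormalized (d : ℕ) (Q : Matrix (Fin d) (Fin d) ℂ) (k : Fin d → ℕ) (hd : 0 < d)
    (α : g d →ₗ[ℂ] g d →ₗ[ℂ] ℂ) : Prop :=
  (∀ m ∈ Rset d Q, m ≠ 2 • k1e1 d k hd →
      α (L d (m - k1e1 d k hd)) (L d (k1e1 d k hd)) = 0) ∧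
  α (L d 0) (L d (2 • k1e1 d k hd)) = 0 ∧
  (∀ s, s ∉ Rset d Q → α (L d 0) (L d s) = 0) ∧
  (∀ m n : Fin d → ℤ, m + n ≠ 0 → α (L d m) (L d n) = 0)

/-- The degree derivation ∂_i, acting by ∂_i(L_m) = m_i L_m. -/
noncomputable def deg (d : ℕ) (i : Fin d) (y : g d) : g d :=
  y.sum fun m a => Finsupp.single m ((m i : ℂ) * a)

open Classical in
/-- The 2-cocycle α₁: α₁(L_m,L_n) = δ_{m+n,0}((m_γ)³-m_γ)/12 for m ∈ R, 0 otherwise,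
where m_γ = (γ|m)/(γ|k₁e₁). -/
noncomputable def alpha1 (d : ℕ) (Q : Matrix (Fin d) (Fin d) ℂ) (γ : Fin d → ℂ)
    (k : Fin d → ℕ) (hd : 0 < d) (x y : g d) : ℂ :=
  x.sum fun m a => y.sum fun n b => a * b *
    (if m ∈ Rset d Q ∧ m + n = 0 then
       ((ip d γ m / ip d γ (k1e1 d k hd)) ^ 3 - ip d γ m / ip d γ (k1e1 d k hd)) / 12
     else 0)

open Classical in
/-- The 2-cocycle α₂: α₂(L_r,L_s) = δ_{r+s,0} σ(r,-r)(γ|r)/(γ|k₁e₁) for r ∉ R,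
0 otherwise. -/
noncomputable def alpha2 (d : ℕ) (Q : Matrix (Fin d) (Fin d) ℂ) (γ : Fin d → ℂ)
    (k : Fin d → ℕ) (hd : 0 < d) (x y : g d) : ℂ :=
  x.sum fun m a => y.sum fun n b => a * b *
    (if m ∉ Rset d Q ∧ m + n = 0 then
       qsigma d Q m (-m) * (ip d γ m / ip d γ (k1e1 d k hd))
     else 0)

end QTorus

open QTorus

/-!
`L_0` acts on `g(γ,Q)` diagonally, `[L_0, L_p] = (γ|p) L_p`, and genericity makes `(γ|p) ≠ 0`
for `p ≠ 0`. The cocycle identity for `L_m, L_n, L_0` reads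
`(γ|m+n) α(L_m, L_n) = sc(m,n) α(L_0, L_{m+n})`, so off the diagonal `α` is the coboundary of
`f(L_p) = α(L_0, L_p) / (γ|p)`.
-/

namespace QTorus

variable {d : ℕ}

theorem Generic.ip_ne_zero {γ : Fin d → ℂ} (hγ : Generic d γ) {p : Fin d → ℤ} (hp : p ≠ 0) :
    ip d γ p ≠ 0 := by
  intro h
  refine hp (funext fun i => ?_)
  have hsum : ∑ i, (p i : ℚ) • γ i = 0 := by
    rw [← h]
    simp [ip, Rat.smul_def, mul_comm]
  exact_mod_cast Fintype.linearIndependent_iff.mp hγ (fun i => (p i : ℚ)) hsum i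

theorem ip_add (γ : Fin d → ℂ) (m n : Fin d → ℤ) : ip d γ (m + n) = ip d γ m + ip d γ n := by
  simp [ip, mul_add, Finset.sum_add_distrib]

theorem br_L_L (Q : Matrix (Fin d) (Fin d) ℂ) (γ : Fin d → ℂ) (m n : Fin d → ℤ) :
    br d Q γ (L d m) (L d n) = sc d Q γ m n • L d (m + n) := by
  simp only [br, L]
  rw [Finsupp.sum_single_index (by simp), Finsupp.sum_single_index (by simp), one_mul, one_mul,
    Finsupp.smul_single, smul_eq_mul, mul_one]

theorem linearCombination_L (v : (Fin d → ℤ) → ℂ) (p : Fin d → ℤ) :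
    Finsupp.linearCombination ℂ v (L d p) = v p := by
  simp [L]

theorem qsigma_zero_left (Q : Matrix (Fin d) (Fin d) ℂ) (n : Fin d → ℤ) :
    qsigma d Q 0 n = 1 := by
  simp [qsigma]

theorem qsigma_zero_right (Q : Matrix (Fin d) (Fin d) ℂ) (m : Fin d → ℤ) :
    qsigma d Q m 0 = 1 := by
  simp [qsigma]

theorem zero_mem_Rset (Q : Matrix (Fin d) (Fin d) ℂ) : (0 : Fin d → ℤ) ∈ Rset d Q := fun n => by
  rw [qsigma_zero_left, qsigma_zero_right]

theorem sc_zero_left (Q : Matrix (Fin d) (Fin d) ℂ) (γ : Fin d → ℂ) (n : Fin d → ℤ) :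
    sc d Q γ 0 n = ip d γ n := by
  by_cases hn : n ∈ Rset d Q <;> simp [sc, zero_mem_Rset, hn, qsigma_zero_left]

theorem sc_zero_right (Q : Matrix (Fin d) (Fin d) ℂ) (γ : Fin d → ℂ) (m : Fin d → ℤ) :
    sc d Q γ m 0 = -ip d γ m := by
  by_cases hm : m ∈ Rset d Q <;>
    simp [sc, zero_mem_Rset, hm, qsigma_zero_left, qsigma_zero_right, ip]

theorem IsCocycle.ip_add_mul_apply_L_L {Q : Matrix (Fin d) (Fin d) ℂ} {γ : Fin d → ℂ}
    {α : g d →ₗ[ℂ] g d →ₗ[ℂ] ℂ} (hα : IsCocycle d Q γ α) (m n : Fin d → ℤ) :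
    ip d γ (m + n) * α (L d m) (L d n) = sc d Q γ m n * α (L d 0) (L d (m + n)) := by
  have hcocycle := hα.2 (L d m) (L d n) (L d 0)
  simp only [br_L_L, sc_zero_left, sc_zero_right, add_zero, zero_add, map_smul,
    LinearMap.smul_apply, smul_eq_mul] at hcocycle
  linear_combination hcocycle - sc d Q γ m n * hα.1 (L d (m + n)) (L d 0)
    + ip d γ n * hα.1 (L d n) (L d m) + α (L d m) (L d n) * ip_add γ m n

end QTorus

theorem stmt13_general (d : ℕ) (Q : Matrix (Fin d) (Fin d) ℂ)
    (γ : Fin d → ℂ) (hγ : Generic d γ)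
    (α : g d →ₗ[ℂ] g d →ₗ[ℂ] ℂ) (hα : IsCocycle d Q γ α) :
    ∃ f : g d →ₗ[ℂ] ℂ,
      ∀ m n : Fin d → ℤ, m + n ≠ 0 →
        α (L d m) (L d n) - f (br d Q γ (L d m) (L d n)) = 0 := by
  refine ⟨Finsupp.linearCombination ℂ fun p => α (L d 0) (L d p) / ip d γ p, fun m n hmn => ?_⟩
  have hip : ip d γ (m + n) ≠ 0 := hγ.ip_ne_zero hmn
  rw [br_L_L, map_smul, linearCombination_L, smul_eq_mul,
    sub_eq_zero, mul_div_assoc', eq_div_iff hip, mul_comm, hα.ip_add_mul_apply_L_L]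

/-- for Q in rational normal form and γ generic, every 2-cocycle α on
g(γ,Q) is cohomologous to one vanishing off the diagonal: there is a linear map
f : g → ℂ with (α − ψ_f)(L_m, L_n) = 0 whenever m + n ≠ 0. -/
theorem stmt13 (d : ℕ) (hd : 1 < d) (Q : Matrix (Fin d) (Fin d) ℂ) (hQ : QOk d Q)
    (z : ℕ) (k : Fin d → ℕ) (hRNF : IsRNF d Q z k)
    (γ : Fin d → ℂ) (hγ : Generic d γ)
    (α : g d →ₗ[ℂ] g d →ₗ[ℂ] ℂ) (hα : IsCocycle d Q γ α) :
    ∃ f : g d →ₗ[ℂ] ℂ,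
      ∀ m n : Fin d → ℤ, m + n ≠ 0 →
        α (L d m) (L d n) - f (br d Q γ (L d m) (L d n)) = 0 :=
  stmt13_general d Q γ hγ α hα
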